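/- arXiv:2602.00206 — 2 statements merged into one kernel-verified Lean document; each statement's English description precedes it below -/
import Mathlib

section
/- Let p be an odd prime and n even with 2 ≤ n ≤ p−3. Then G_n(p) ≡ p(p−1)·B_n·(1 + i^n) (mod p²) in ℤ[i] (working in ℤ_(p)[i] to interpret the Bernoulli number). In particular, if n ≡ 2 (mod 4) then G_n(p) ≡ 0 (mod p²), and if n ≡ 0 (mod 4) then G_n(p) ≡ 2p(p−1)·B_n (mod p²). -/
noncomputable section

/-- `i` in the Gaussian integers. -/
def Ig : GaussianInt := ⟨0, 1⟩

/-- Classical power sum `S_r(N) = ∑_{t=1}^N t^r`. -/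
def Sps (r N : ℕ) : ℤ := ∑ t ∈ Finset.Icc 1 N, (t : ℤ) ^ r

/-- Gaussian power sum `F_n(k,m) = ∑_{a=1}^k ∑_{b=1}^m (a+bi)^n`. -/
def Fg (n k m : ℕ) : GaussianInt :=
  ∑ a ∈ Finset.Icc 1 k, ∑ b ∈ Finset.Icc 1 m, ((a : GaussianInt) + (b : GaussianInt) * Ig) ^ n

/-- Square Gaussian power sum `G_n(N) = F_n(N-1,N-1)`. -/
def Gg (n N : ℕ) : GaussianInt := Fg n (N - 1) (N - 1)

/-! Expanding `(a + b i)ⁿ` binomially gives `G_n(p) = ∑ₖ C(n, k) Sₖ Sₙ₋ₖ iⁿ⁻ᵏ`, where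
`Sₖ = ∑_{0 < t < p} tᵏ`. For `0 < k < p - 1` the power sum `Sₖ` vanishes modulo `p` (it is a power
sum over `𝔽_p`), so modulo `p²` only the terms `k = 0` and `k = n` survive, leaving
`(p - 1)(1 + iⁿ) Sₙ`. Faulhaber's formula then gives `Sₙ ≡ p Bₙ (mod p²)`, because the Bernoulli
numbers `Bᵢ` with `i < p - 1` are `p`-integral by von Staudt–Clausen. -/

open Finset

theorem Finset.sum_sum_add_pow {R α β : Type*} [CommSemiring R] (s : Finset α) (t : Finset β)
    (f : α → R) (g : β → R) (n : ℕ) :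
    ∑ a ∈ s, ∑ b ∈ t, (f a + g b) ^ n =
      ∑ k ∈ range (n + 1), (∑ a ∈ s, f a ^ k) * (∑ b ∈ t, g b ^ (n - k)) * (n.choose k : R) := by
  simp_rw [add_pow, sum_mul_sum, sum_mul]
  rw [Finset.sum_comm (s := range _)]
  exact Finset.sum_congr rfl fun a _ => Finset.sum_comm

theorem Sps_eq_sum_range {R : Type*} [CommRing R] {r : ℕ} (hr : r ≠ 0) (N : ℕ) :
    ((Sps r N : ℤ) : R) = ∑ t ∈ range (N + 1), (t : R) ^ r := by
  rw [Sps, range_eq_Ico, sum_eq_sum_Ico_succ_bot N.succ_pos, ← Ico_add_one_right_eq_Icc]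
  simp [zero_pow hr]

theorem Sps_zero (N : ℕ) : Sps 0 N = N := by simp [Sps]

theorem prime_dvd_Sps {p r : ℕ} [Fact p.Prime] (hr : r ≠ 0) (hrp : r < p - 1) :
    (p : ℤ) ∣ Sps r (p - 1) := by
  rw [← ZMod.intCast_zmod_eq_zero_iff_dvd, Sps_eq_sum_range hr,
    Nat.sub_add_cancel (Fact.out : p.Prime).one_le]
  rw [show ∑ t ∈ range p, (t : ZMod p) ^ r = ∑ x : ZMod p, x ^ r from
    sum_nbij' (fun t => (t : ZMod p)) ZMod.val (fun _ _ => mem_univ _)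
      (fun x _ => mem_range.2 (ZMod.val_lt x))
      (fun t ht => ZMod.val_cast_of_lt (mem_range.1 ht))
      (fun x _ => ZMod.natCast_zmod_val x) (fun _ _ => rfl)]
  exact FiniteField.sum_pow_lt_card_sub_one (K := ZMod p) r (by rwa [ZMod.card])

theorem Ig_sq : Ig ^ 2 = -1 := by
  ext <;> simp [Ig, pow_two, Zsqrtd.re_mul, Zsqrtd.im_mul]

theorem Ig_pow_of_even {n : ℕ} (hn : Even n) : Ig ^ n = ((-1 : ℤ) ^ (n / 2) : ℤ) := by
  obtain ⟨m, rfl⟩ := hn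
  rw [← two_mul, pow_mul, Ig_sq, Nat.mul_div_cancel_left m two_pos]
  push_cast
  rfl

theorem Gg_eq_sum (n p : ℕ) :
    Gg n p = ∑ k ∈ range (n + 1),
      (Sps k (p - 1) * Sps (n - k) (p - 1) * n.choose k : ℤ) * Ig ^ (n - k) := by
  rw [Gg, Fg, Finset.sum_sum_add_pow]
  refine sum_congr rfl fun k _ => ?_
  simp only [Sps, mul_pow, ← sum_mul]
  push_cast
  ring

theorem sq_dvd_Gg_sub {p n : ℕ} [Fact p.Prime] (hn : n ≠ 0) (hnp : n < p - 1) :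
    ((p ^ 2 : ℤ) : GaussianInt) ∣
      Gg n p - ((p - 1) * Sps n (p - 1) : ℤ) * (1 + Ig ^ n) := by
  have hS0 : Sps 0 (p - 1) = p - 1 := by
    rw [Sps_zero, Nat.cast_sub (Fact.out : p.Prime).one_le, Nat.cast_one]
  obtain ⟨m, rfl⟩ : ∃ m, n = m + 1 := ⟨n - 1, by omega⟩
  rw [Gg_eq_sum, sum_range_succ, sum_range_succ', Nat.sub_self, Nat.sub_zero, hS0,
    Nat.choose_self, Nat.choose_zero_right]
  have hmid : ((p ^ 2 : ℤ) : GaussianInt) ∣ ∑ k ∈ range m,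
      (Sps (k + 1) (p - 1) * Sps (m + 1 - (k + 1)) (p - 1) * (m + 1).choose (k + 1) : ℤ) *
        Ig ^ (m + 1 - (k + 1)) := by
    refine Finset.dvd_sum fun k hk => dvd_mul_of_dvd_left (Int.cast_dvd_cast _ _ ?_) _
    have hk := mem_range.1 hk
    exact dvd_mul_of_dvd_left (pow_two (p : ℤ) ▸ mul_dvd_mul
      (prime_dvd_Sps (by omega) (by omega)) (prime_dvd_Sps (by omega) (by omega))) _
  convert hmid using 1
  push_cast
  ring

theorem Padic.norm_bernoulli_le_one {p r : ℕ} [Fact p.Prime] (h : ¬ (p - 1) ∣ r) :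
    ‖((bernoulli r : ℚ) : ℚ_[p])‖ ≤ 1 := by
  rcases Nat.even_or_odd r with ⟨k, rfl⟩ | hodd
  · obtain ⟨z, hz⟩ := Bernoulli.vonStaudt_clausen k
    rw [← two_mul, eq_sub_of_add_eq hz.symm]
    push_cast
    rw [sub_eq_add_neg]
    refine (IsUltrametricDist.norm_add_le_max _ _).trans (max_le (Padic.norm_int_le_one z) ?_)
    rw [norm_neg]
    refine IsUltrametricDist.norm_sum_le_of_forall_le_of_nonneg zero_le_one fun q hq => ?_
    obtain ⟨hq, hqk⟩ := (mem_filter.1 hq).2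
    have hqp : q ≠ p := by rintro rfl; exact h (two_mul k ▸ hqk)
    rw [norm_div, norm_one, Padic.norm_natCast_eq_one_iff.2
      ((Nat.coprime_primes Fact.out hq).2 hqp.symm), div_one]
  · rcases eq_or_ne r 1 with rfl | hr
    · have hp2 : p ≠ 2 := by rintro rfl; exact h (one_dvd 1)
      rw [bernoulli_one]
      push_cast
      rw [norm_div, norm_neg, norm_one, show (2 : ℚ_[p]) = (2 : ℕ) from rfl,
        Padic.norm_natCast_eq_one_iff.2 ((Nat.coprime_primes Fact.out Nat.prime_two).2 hp2)]
      norm_num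
    · simp [bernoulli_eq_zero_of_odd hodd (lt_of_le_of_ne hodd.pos hr.symm)]

theorem norm_Sps_sub_mul_bernoulli_le {p r : ℕ} [Fact p.Prime] (hr : r ≠ 0)
    (hrp : r < p - 1) :
    ‖((Sps r (p - 1) : ℤ) : ℚ_[p]) - p * (bernoulli r : ℚ)‖ ≤ (p : ℝ) ^ (-(2 : ℤ)) := by
  have hp := (Fact.out : p.Prime)
  have faulhaber := congrArg ((↑) : ℚ → ℚ_[p]) (sum_range_pow p r)
  push_cast at faulhaber
  rw [Sps_eq_sum_range hr, Nat.sub_add_cancel hp.one_le, faulhaber, sum_range_succ,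
    Nat.choose_succ_self_right, Nat.add_sub_cancel_left, pow_one]
  have hr1 : ((r : ℚ_[p]) + 1) ≠ 0 := by exact_mod_cast r.succ_ne_zero
  rw [show ((bernoulli r : ℚ) : ℚ_[p]) * ((r + 1 : ℕ) : ℚ_[p]) * p / (r + 1) = p * bernoulli r by
    push_cast; field_simp, add_sub_cancel_right]
  refine IsUltrametricDist.norm_sum_le_of_forall_le_of_nonneg (by positivity) fun i hi => ?_
  have hi := mem_range.1 hi
  have hB : ‖((bernoulli i : ℚ) : ℚ_[p])‖ ≤ 1 := by
    rcases eq_or_ne i 0 with rfl | hi0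
    · simp
    · exact Padic.norm_bernoulli_le_one
        (Nat.not_dvd_of_pos_of_lt (Nat.pos_of_ne_zero hi0) (by omega))
  have hunit : ‖((r : ℚ_[p]) + 1)‖ = 1 := by
    exact_mod_cast Padic.norm_natCast_eq_one_iff.2
      (Nat.coprime_of_lt_prime r.succ_ne_zero (by omega) hp)
  have hpow : ‖(p : ℚ_[p]) ^ (r + 1 - i)‖ ≤ (p : ℝ) ^ (-(2 : ℤ)) := by
    rw [Padic.norm_p_pow]
    exact zpow_le_zpow_right₀ (by exact_mod_cast hp.one_le) (by omega)
  rw [norm_div, hunit, div_one, norm_mul, norm_mul]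
  calc _ ≤ 1 * 1 * (p : ℝ) ^ (-(2 : ℤ)) := by
        gcongr
        exact IsUltrametricDist.norm_natCast_le_one ℚ_[p] _
    _ = _ := by ring

theorem sq_dvd_Gg_re_sub_and_im {p n : ℕ} [Fact p.Prime] (hn : Even n) (hn0 : n ≠ 0)
    (hnp : n < p - 1) :
    (p ^ 2 : ℤ) ∣ (Gg n p).re - (p - 1) * Sps n (p - 1) * (1 + (-1) ^ (n / 2)) ∧
      (p ^ 2 : ℤ) ∣ (Gg n p).im := by
  have h := sq_dvd_Gg_sub hn0 hnp
  rw [Ig_pow_of_even hn, show (((p - 1) * Sps n (p - 1) : ℤ) : GaussianInt) * (1 + _) =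
    (((p - 1) * Sps n (p - 1) * (1 + (-1) ^ (n / 2)) : ℤ) : GaussianInt) by push_cast; ring] at h
  rwa [Zsqrtd.intCast_dvd, Zsqrtd.re_sub, Zsqrtd.im_sub, Zsqrtd.re_intCast, Zsqrtd.im_intCast,
    sub_zero] at h

theorem norm_Gg_re_sub_le {p n : ℕ} [Fact p.Prime] (hn : Even n) (hn0 : n ≠ 0)
    (hnp : n < p - 1) :
    ‖(((Gg n p).re : ℚ_[p]) -
        p * (p - 1) * (bernoulli n : ℚ) * (1 + (-1) ^ (n / 2)))‖ ≤ (p : ℝ) ^ (-(2 : ℤ)) := by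
  rw [show ((Gg n p).re : ℚ_[p]) - p * (p - 1) * (bernoulli n : ℚ) * (1 + (-1) ^ (n / 2)) =
      (((Gg n p).re - (p - 1) * Sps n (p - 1) * (1 + (-1) ^ (n / 2)) : ℤ) : ℚ_[p]) +
        (((p - 1) * (1 + (-1) ^ (n / 2)) : ℤ) : ℚ_[p]) *
          ((Sps n (p - 1) : ℚ_[p]) - p * (bernoulli n : ℚ)) by push_cast; ring]
  refine (IsUltrametricDist.norm_add_le_max _ _).trans (max_le ?_ ?_)
  · exact (Padic.norm_int_le_pow_iff_dvd _ 2).2 (sq_dvd_Gg_re_sub_and_im hn hn0 hnp).1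
  · rw [norm_mul]
    exact (mul_le_of_le_one_left (norm_nonneg _) (Padic.norm_int_le_one _)).trans
      (norm_Sps_sub_mul_bernoulli_le hn0 hnp)

theorem stmt10_general (p n : ℕ) [Fact p.Prime] (hn : Even n)
    (hn2 : 2 ≤ n) (hn3 : n ≤ p - 3) :
    (‖(((Gg n p).re : ℚ_[p]) -
        (p : ℚ_[p]) * ((p : ℚ_[p]) - 1) * ((bernoulli n : ℚ) : ℚ_[p]) * (1 + (-1 : ℚ_[p]) ^ (n / 2)))‖
        ≤ (p : ℝ) ^ (-(2 : ℤ)) ∧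
      ‖(((Gg n p).im : ℚ_[p]))‖ ≤ (p : ℝ) ^ (-(2 : ℤ))) ∧
    (n % 4 = 2 →
      ‖(((Gg n p).re : ℚ_[p]))‖ ≤ (p : ℝ) ^ (-(2 : ℤ))) ∧
    (n % 4 = 0 →
      ‖(((Gg n p).re : ℚ_[p]) -
        2 * (p : ℚ_[p]) * ((p : ℚ_[p]) - 1) * ((bernoulli n : ℚ) : ℚ_[p]))‖ ≤ (p : ℝ) ^ (-(2 : ℤ))) := by
  have hn0 : n ≠ 0 := by omega
  have hnp : n < p - 1 := by omega
  have hre := norm_Gg_re_sub_le hn hn0 hnp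
  have him := (Padic.norm_int_le_pow_iff_dvd _ 2).2 (sq_dvd_Gg_re_sub_and_im hn hn0 hnp).2
  refine ⟨⟨hre, him⟩, fun h4 => ?_, fun h4 => ?_⟩
  · rwa [Odd.neg_one_pow (Nat.odd_iff.2 (by omega)), add_neg_cancel, mul_zero, sub_zero] at hre
  · rw [Even.neg_one_pow (Nat.even_iff.2 (by omega))] at hre
    convert hre using 3
    ring

theorem stmt10 (p n : ℕ) [Fact p.Prime] (hodd : Odd p) (hn : Even n)
    (hn2 : 2 ≤ n) (hn3 : n ≤ p - 3) :
    (‖(((Gg n p).re : ℚ_[p]) -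
        (p : ℚ_[p]) * ((p : ℚ_[p]) - 1) * ((bernoulli n : ℚ) : ℚ_[p]) * (1 + (-1 : ℚ_[p]) ^ (n / 2)))‖
        ≤ (p : ℝ) ^ (-(2 : ℤ)) ∧
      ‖(((Gg n p).im : ℚ_[p]))‖ ≤ (p : ℝ) ^ (-(2 : ℤ))) ∧
    (n % 4 = 2 →
      ‖(((Gg n p).re : ℚ_[p]))‖ ≤ (p : ℝ) ^ (-(2 : ℤ))) ∧
    (n % 4 = 0 →
      ‖(((Gg n p).re : ℚ_[p]) -
        2 * (p : ℚ_[p]) * ((p : ℚ_[p]) - 1) * ((bernoulli n : ℚ) : ℚ_[p]))‖ ≤ (p : ℝ) ^ (-(2 : ℤ))) :=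
  stmt10_general p n hn hn2 hn3
end
end

section
/- Let p ≥ 7 be a prime with p ≡ 3 (mod 4), and set S_r = ∑_{t=1}^{p-1} t^r. Then in ℤ_(p): S_p − (p²/2)·S_{p−1} ≡ −(p⁵/24)·(p−1)(p−2)·B_{p−3} (mod p⁶). -/
noncomputable section

/-! Faulhaber's formula `S_r(p-1) = ∑ᵢ B_i C(r+1,i) p^(r+1-i) / (r+1)` gives
`S_p - (p²/2) S_(p-1) = ∑_{i ≤ p} B_i p^(p+1-i) (C(p+1,i)/(p+1) - C(p,i)/2)`.
The bracket is `p`-integral since `p ∤ 2(p+1)`, and `B_i` is `p`-integral for `i < p - 1` by the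
recursion `∑_{k ≤ n} C(n+1,k) B_k = 0`, so every term with `i ≤ p - 5` vanishes mod `p⁶`.
Among the remaining indices the bracket vanishes at `i = p - 1`, `B_i = 0` for odd `i`,
and `i = p - 3` is exactly the right-hand side. -/

open Finset

theorem Sps_eq_sum_range_pow (N : ℕ) {r : ℕ} (hr : r ≠ 0) :
    (Sps r N : ℚ) = ∑ k ∈ range (N + 1), (k : ℚ) ^ r := by
  rw [Sps, sum_range_succ', Nat.cast_zero, zero_pow hr, add_zero, Int.cast_sum,
    ← Ico_add_one_right_eq_Icc, sum_Ico_eq_sum_range]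
  simp [add_comm]

theorem Sps_eq_sum_bernoulli (N : ℕ) {r : ℕ} (hr : r ≠ 0) :
    (Sps r N : ℚ) = ∑ i ∈ range (r + 1),
      bernoulli i * (r + 1).choose i * ((N : ℚ) + 1) ^ (r + 1 - i) / (r + 1) := by
  rw [Sps_eq_sum_range_pow N hr, sum_range_pow]
  push_cast
  rfl

/-- The coefficient of `B_i n^(n+1-i)` in `S_n(n-1) - (n²/2) S_(n-1)(n-1)`. -/
def powerSumDiffCoeff (n i : ℕ) : ℚ := (n + 1).choose i / (n + 1) - n.choose i / 2

def powerSumDiffTerm (n i : ℕ) : ℚ := bernoulli i * n ^ (n + 1 - i) * powerSumDiffCoeff n i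

theorem Sps_sub_mul_Sps_eq_sum {n : ℕ} (hn : Odd n) (h1 : 1 < n) :
    (Sps n (n - 1) : ℚ) - (n : ℚ) ^ 2 / 2 * Sps (n - 1) (n - 1) =
      ∑ i ∈ range (n + 1), powerSumDiffTerm n i := by
  have hcast : ((n - 1 : ℕ) : ℚ) + 1 = n := by
    rw [Nat.cast_sub h1.le]; ring
  rw [Sps_eq_sum_bernoulli _ (by omega), Sps_eq_sum_bernoulli _ (by omega), hcast,
    Nat.sub_add_cancel h1.le, sum_range_succ, sum_range_succ, powerSumDiffTerm,
    bernoulli_eq_zero_of_odd hn h1, mul_sum]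
  simp only [zero_mul, zero_div, add_zero, ← sum_sub_distrib]
  refine sum_congr rfl fun i hi => ?_
  have hi : i < n := mem_range.mp hi
  rw [powerSumDiffTerm, powerSumDiffCoeff, show n + 1 - i = n - i + 1 by omega, pow_succ]
  field_simp

theorem powerSumDiffTerm_pred (m : ℕ) : powerSumDiffTerm (m + 1) m = 0 := by
  rw [powerSumDiffTerm, powerSumDiffCoeff, show m + 1 + 1 = m + 2 from rfl,
    Nat.cast_add_choose, Nat.cast_add_choose]
  push_cast [Nat.factorial_succ]
  field_simp
  ring

theorem powerSumDiffTerm_sub_three {n : ℕ} (hn : 3 ≤ n) :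
    powerSumDiffTerm n (n - 3) =
      -((n : ℚ) ^ 5 / 24) * ((n : ℚ) - 1) * ((n : ℚ) - 2) * bernoulli (n - 3) := by
  obtain ⟨m, rfl⟩ := Nat.exists_eq_add_of_le' hn
  rw [powerSumDiffTerm, powerSumDiffCoeff, Nat.add_sub_cancel, show m + 3 + 1 = m + 4 from rfl,
    Nat.cast_add_choose, Nat.cast_add_choose, show m + 3 + 1 - m = 4 by omega]
  push_cast [Nat.factorial_succ]
  field_simp
  ring

section Padic

variable {p : ℕ} [Fact p.Prime]

theorem Padic.norm_natCast_le_one (k : ℕ) : ‖(k : ℚ_[p])‖ ≤ 1 := by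
  exact_mod_cast Padic.norm_int_le_one (p := p) k

theorem norm_bernoulli_le_one {n : ℕ} (hn : n + 1 < p) : ‖(bernoulli n : ℚ_[p])‖ ≤ 1 := by
  induction n using Nat.strong_induction_on with
  | _ n ih =>
  rcases Nat.eq_zero_or_pos n with rfl | hn0
  · simp
  have hrec : ((n + 1 : ℕ) : ℚ) * bernoulli n =
      -∑ k ∈ range n, ((n + 1).choose k : ℚ) * bernoulli k := by
    have h := sum_bernoulli (n + 1)
    rw [if_neg (by omega), sum_range_succ, Nat.choose_succ_self_right] at h
    linear_combination h
  have hunit : ‖((n + 1 : ℕ) : ℚ_[p])‖ = 1 :=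
    Padic.norm_natCast_eq_one_iff.mpr (Nat.coprime_of_lt_prime (by omega) hn Fact.out)
  have hsum : ‖∑ k ∈ range n, (((n + 1).choose k : ℚ) * bernoulli k : ℚ_[p])‖ ≤ 1 :=
    IsUltrametricDist.norm_sum_le_of_forall_le_of_nonneg zero_le_one fun k hk => by
      rw [norm_mul]
      exact mul_le_one₀ (Padic.norm_natCast_le_one _) (norm_nonneg _)
        (ih k (mem_range.mp hk) (by have := mem_range.mp hk; omega))
  have hcast := congrArg (fun q : ℚ => (q : ℚ_[p])) hrec
  push_cast at hcast hunit hsum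
  calc ‖(bernoulli n : ℚ_[p])‖ = ‖((n : ℚ_[p]) + 1) * bernoulli n‖ := by
        rw [norm_mul, hunit, one_mul]
    _ ≤ 1 := by rwa [hcast, norm_neg]

theorem norm_powerSumDiffCoeff_le_one (hp2 : p ≠ 2) {n : ℕ} (hn : p.Coprime (n + 1)) (i : ℕ) :
    ‖(powerSumDiffCoeff n i : ℚ_[p])‖ ≤ 1 := by
  have h2 : ‖((2 : ℕ) : ℚ_[p])‖ = 1 :=
    Padic.norm_natCast_eq_one_iff.mpr ((Nat.coprime_primes Fact.out Nat.prime_two).mpr hp2)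
  have hn1 : ‖((n + 1 : ℕ) : ℚ_[p])‖ = 1 := Padic.norm_natCast_eq_one_iff.mpr hn
  push_cast at h2 hn1
  rw [powerSumDiffCoeff]
  push_cast
  rw [sub_eq_add_neg]
  refine (Padic.nonarchimedean _ _).trans (max_le ?_ ?_) <;>
    simp only [norm_neg, norm_div, h2, hn1, div_one, Padic.norm_natCast_le_one]

theorem norm_powerSumDiffTerm_le (hp2 : p ≠ 2) {i : ℕ} (hi : i + 1 < p) :
    ‖(powerSumDiffTerm p i : ℚ_[p])‖ ≤ (p : ℝ) ^ (-(p + 1 - i : ℕ) : ℤ) := by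
  rw [powerSumDiffTerm, Rat.cast_mul, Rat.cast_mul, Rat.cast_pow, Rat.cast_natCast, norm_mul,
    norm_mul, Padic.norm_p_pow]
  have hcoeff := norm_powerSumDiffCoeff_le_one hp2
    (Nat.coprime_self_add_right.mpr (Nat.coprime_one_right p)) i
  calc _ ≤ 1 * (p : ℝ) ^ (-(p + 1 - i : ℕ) : ℤ) * 1 := by
        gcongr
        exact norm_bernoulli_le_one hi
    _ = _ := by ring

theorem norm_powerSumDiffTerm_le_of_ne_sub_three (hp7 : 7 ≤ p) {i : ℕ} (hi : i ≤ p)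
    (hi3 : i ≠ p - 3) : ‖(powerSumDiffTerm p i : ℚ_[p])‖ ≤ (p : ℝ) ^ (-6 : ℤ) := by
  have hp : p.Prime := Fact.out
  by_cases hsmall : i + 5 ≤ p
  · refine (norm_powerSumDiffTerm_le (by omega) (by omega)).trans ?_
    exact zpow_le_zpow_right₀ (by exact_mod_cast hp.one_lt.le) (by omega)
  suffices powerSumDiffTerm p i = 0 by
    rw [this, Rat.cast_zero, norm_zero]
    positivity
  by_cases hi1 : i = p - 1
  · have h := powerSumDiffTerm_pred (p - 1)
    rwa [Nat.sub_add_cancel hp.one_le, ← hi1] at h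
  have hp_odd : p % 2 = 1 := Nat.odd_iff.mp (hp.odd_of_ne_two (by omega))
  rw [powerSumDiffTerm, bernoulli_eq_zero_of_odd (Nat.odd_iff.mpr (by omega)) (by omega),
    zero_mul, zero_mul]

end Padic

theorem stmt17_general (p : ℕ) [Fact p.Prime] (hp7 : 7 ≤ p) :
    ‖((Sps p (p - 1) : ℚ_[p]) - (p : ℚ_[p]) ^ 2 / 2 * (Sps (p - 1) (p - 1) : ℚ_[p]) -
      (-((p : ℚ_[p]) ^ 5 / 24) * ((p : ℚ_[p]) - 1) * ((p : ℚ_[p]) - 2) *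
        ((bernoulli (p - 3) : ℚ) : ℚ_[p])))‖ ≤ (p : ℝ) ^ (-(6 : ℤ)) := by
  have hp : p.Prime := Fact.out
  have hsum : (Sps p (p - 1) : ℚ) - (p : ℚ) ^ 2 / 2 * Sps (p - 1) (p - 1) -
      -((p : ℚ) ^ 5 / 24) * ((p : ℚ) - 1) * ((p : ℚ) - 2) * bernoulli (p - 3) =
      ∑ i ∈ (range (p + 1)).erase (p - 3), powerSumDiffTerm p i := by
    rw [Sps_sub_mul_Sps_eq_sum (hp.odd_of_ne_two (by omega)) hp.one_lt,
      ← powerSumDiffTerm_sub_three (by omega), sum_erase_eq_sub (mem_range.mpr (by omega))]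
  have hcast := congrArg (fun q : ℚ => (q : ℚ_[p])) hsum
  push_cast at hcast
  rw [hcast]
  refine IsUltrametricDist.norm_sum_le_of_forall_le_of_nonneg (by positivity) fun i hi => ?_
  obtain ⟨hi3, hi⟩ := mem_erase.mp hi
  exact norm_powerSumDiffTerm_le_of_ne_sub_three hp7 (Nat.lt_succ_iff.mp (mem_range.mp hi)) hi3

theorem stmt17 (p : ℕ) [Fact p.Prime] (hp7 : 7 ≤ p) (h3 : p % 4 = 3) :
    ‖((Sps p (p - 1) : ℚ_[p]) - (p : ℚ_[p]) ^ 2 / 2 * (Sps (p - 1) (p - 1) : ℚ_[p]) -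
      (-((p : ℚ_[p]) ^ 5 / 24) * ((p : ℚ_[p]) - 1) * ((p : ℚ_[p]) - 2) *
        ((bernoulli (p - 3) : ℚ) : ℚ_[p])))‖ ≤ (p : ℝ) ^ (-(6 : ℤ)) :=
  stmt17_general p hp7
end
end
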